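/- Let f : ℝ^N → ℝ^N be C¹, let (U,F) be a convex entropy pair for f, fix w ∈ ℝ^N, and let v : [0,∞) → ℝ^N be differentiable with v'(y) = f(v(y)) − f(w) for all y ≥ 0. Then the function Ω(y) = F(w) − F(v(y)) − ⟨∇U(v(y)), f(w) − f(v(y))⟩ satisfies Ω'(y) = ⟨f(w) − f(v(y)), (∇²U)(v(y)) · (f(w) − f(v(y)))⟩ ≥ 0 for every y ≥ 0; in particular Ω is monotone nondecreasing on [0,∞). -/

import Mathlib

/-!
Write `d = f(w) - f(u)` and `Ω(u) = F(w) - F(u) - ∇U(u)·d`. Differentiating in a direction `h`,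
the entropy pair identity `∇F = Df^T ∇U` makes the two first-order terms `-∇F(u)·h` and
`∇U(u)·Df(u)h` cancel, leaving `DΩ(u) h = -⟨∇²U(u) h, d⟩`. Along the boundary layer ODE the
direction is `v' = -d`, so `Ω(v(y))' = ⟨∇²U(v(y)) d, d⟩`, which is nonnegative by convexity of `U`.
-/

open Set

section EntropyDefect

variable {𝕜 : Type*} [NontriviallyNormedField 𝕜]
  {E : Type*} [NormedAddCommGroup E] [NormedSpace 𝕜 E]

/-- The quantity `Ω` of the boundary layer, as a function of the state `u = v(y)`. -/
noncomputable def entropyDefect (f : E → E) (U F : E → 𝕜) (w u : E) : 𝕜 :=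
  F w - F u - fderiv 𝕜 U u (f w - f u)

theorem fderiv_fderiv_apply_const {G : Type*} [NormedAddCommGroup G] [NormedSpace 𝕜 G]
    {U : E → G} {u : E}
    (hU : DifferentiableAt 𝕜 (fderiv 𝕜 U) u) (z h : E) :
    fderiv 𝕜 (fun x => fderiv 𝕜 U x z) u h = fderiv 𝕜 (fderiv 𝕜 U) u h z := by
  rw [fderiv_clm_apply hU (differentiableAt_const z)]
  simp

theorem hasFDerivAt_entropyDefect {f : E → E} {U F : E → 𝕜} {w u : E}
    (hf : DifferentiableAt 𝕜 f u) (hF : DifferentiableAt 𝕜 F u)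
    (hU : DifferentiableAt 𝕜 (fderiv 𝕜 U) u)
    (hEP : fderiv 𝕜 F u = (fderiv 𝕜 U u).comp (fderiv 𝕜 f u)) :
    HasFDerivAt (entropyDefect f U F w)
      (-(fderiv 𝕜 (fderiv 𝕜 U) u).flip (f w - f u)) u := by
  have hflux := hU.hasFDerivAt.clm_apply (hf.hasFDerivAt.const_sub (f w))
  refine ((hF.hasFDerivAt.const_sub (F w)).sub hflux).congr_fderiv ?_
  ext h
  simp [hEP]

theorem HasDerivAt.entropyDefect_boundaryLayer {f : E → E} {U F : E → 𝕜} {w : E}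
    {v : 𝕜 → E} {y : 𝕜} (hv : HasDerivAt v (f (v y) - f w) y)
    (hf : DifferentiableAt 𝕜 f (v y)) (hF : DifferentiableAt 𝕜 F (v y))
    (hU : DifferentiableAt 𝕜 (fderiv 𝕜 U) (v y))
    (hEP : fderiv 𝕜 F (v y) = (fderiv 𝕜 U (v y)).comp (fderiv 𝕜 f (v y))) :
    HasDerivAt (fun z => entropyDefect f U F w (v z))
      (fderiv 𝕜 (fun x => fderiv 𝕜 U x (f w - f (v y))) (v y) (f w - f (v y))) y := by
  refine ((hasFDerivAt_entropyDefect hf hF hU hEP).comp_hasDerivAt y hv).congr_deriv ?_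
  rw [fderiv_fderiv_apply_const hU, ← neg_sub (f w)]
  simp only [neg_apply, ContinuousLinearMap.flip_apply, map_neg, neg_neg]

end EntropyDefect

theorem monotoneOn_Ici_of_hasDerivAt_nonneg {g g' : ℝ → ℝ} {a : ℝ}
    (hg : ∀ x ∈ Ici a, HasDerivAt g (g' x) x) (hg' : ∀ x ∈ Ici a, 0 ≤ g' x) :
    MonotoneOn g (Ici a) := by
  refine monotoneOn_of_hasDerivWithinAt_nonneg (f' := g') (convex_Ici a)
    (fun x hx => (hg x hx).continuousAt.continuousWithinAt) (fun x hx => ?_) (fun x hx => ?_)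
  · exact (hg x (interior_subset hx)).hasDerivWithinAt
  · exact hg' x (interior_subset hx)

theorem boundary_layer_entropy_monotone {N : ℕ}
    (f : EuclideanSpace ℝ (Fin N) → EuclideanSpace ℝ (Fin N))
    (U F : EuclideanSpace ℝ (Fin N) → ℝ)
    (hf : ContDiff ℝ 1 f) (hU : ContDiff ℝ 2 U) (hF : ContDiff ℝ 2 F)
    (hEP : ∀ u w, fderiv ℝ F u w = fderiv ℝ U u (fderiv ℝ f u w))
    (hconv : ∀ u w, 0 ≤ fderiv ℝ (fun x => fderiv ℝ U x w) u w)
    (w : EuclideanSpace ℝ (Fin N)) (v : ℝ → EuclideanSpace ℝ (Fin N))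
    (hv : ∀ y : ℝ, 0 ≤ y → HasDerivAt v (f (v y) - f w) y) :
    (∀ y : ℝ, 0 ≤ y →
      HasDerivAt (fun z => F w - F (v z) - fderiv ℝ U (v z) (f w - f (v z)))
        (fderiv ℝ (fun x => fderiv ℝ U x (f w - f (v y))) (v y) (f w - f (v y))) y
      ∧ 0 ≤ fderiv ℝ (fun x => fderiv ℝ U x (f w - f (v y))) (v y) (f w - f (v y)))
    ∧ MonotoneOn (fun z => F w - F (v z) - fderiv ℝ U (v z) (f w - f (v z)))
        (Set.Ici (0 : ℝ)) := by
  have hU' : Differentiable ℝ (fderiv ℝ U) :=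
    (hU.fderiv_right (by norm_num)).differentiable one_ne_zero
  have hderiv (y : ℝ) (hy : 0 ≤ y) :=
    (hv y hy).entropyDefect_boundaryLayer (hf.differentiable one_ne_zero _)
      (hF.differentiable two_ne_zero _) (hU' _) (ContinuousLinearMap.ext (hEP (v y)))
  exact ⟨fun y hy => ⟨hderiv y hy, hconv _ _⟩,
    monotoneOn_Ici_of_hasDerivAt_nonneg hderiv (fun _ _ => hconv _ _)⟩
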